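/- Let 0 < α ≤ 2, p1, p2 > 0, P = 1/p1 + 1/p2 with α/(1+α) < P < α and P ≠ 1. Assume additionally P_{(1+α)/α,1/α} := (1+α)/(α p1) + 1/(α p2) > 1. Let g0 satisfy |∂_2 g0(u)| ≤ C ρ0(u)^{1/p1−1} and |∂_{12} g0(u)| ≤ C ρ0(u)^{−1} for all u ≠ 0, where ρ0(u) = |u1|^{p1}+|u2|^{p2}. Then for every t > 0, h̃1(t;u) := ∂_2 g0(t−u1, −u2) − ∂_2 g0(−u1,−u2) satisfies ∫_{ℝ²} |h̃1(t;u)|^α du < ∞. -/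

import Mathlib

/-!
Split the plane into the square `[-2t, 2t]²` and its complement.

On the square, the growth bound on `∂₂g₀` dominates `|h̃₁(t;u)|^α` by
`ρ₀(t - u₁, -u₂)^β + ρ₀(u)^β` with `β = (1/p₁ - 1)α`. The condition `P_{(1+α)/α,1/α} > 1` says
exactly `β > -(1/p₁ + 1/p₂)`, and weighted AM-GM gives `ρ₀(u)^β ≤ |u₁|^{qβ} |u₂|^{qβ}` with
`q = (1/p₁ + 1/p₂)⁻¹`, so `ρ₀^β` is locally integrable.

Off the square, the mean value theorem on the horizontal segment from `(-u₁, -u₂)` to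
`(t - u₁, -u₂)` and the bound on `∂₁₂g₀` give `|h̃₁(t;u)| ≤ C t / r` whenever `ρ₀ ≥ r` on that
segment. For `|u₁| > 2t` one can take `r = ρ₀(u) / 2^{p₁}`, and `ρ₀^{-α}` is integrable there because
`α > 1/p₁ + 1/p₂`; for `|u₁| ≤ 2t < |u₂|` one takes `r = |u₂|^{p₂}`, and `p₂α > 1`.
-/

open MeasureTheory

/-- `ρ₀(u) = |u₁|^{p₁} + |u₂|^{p₂}`. -/
noncomputable def rho0 (p1 p2 : ℝ) (u : ℝ × ℝ) : ℝ := |u.1| ^ p1 + |u.2| ^ p2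

/-- Partial derivative `∂₂ g`. -/
noncomputable def pd2 (g : ℝ × ℝ → ℝ) (u : ℝ × ℝ) : ℝ := deriv (fun b => g (u.1, b)) u.2

/-- Mixed partial derivative `∂₁₂ g`. -/
noncomputable def pd12 (g : ℝ × ℝ → ℝ) (u : ℝ × ℝ) : ℝ :=
  deriv (fun b => deriv (fun a => g (a, b)) u.1) u.2

open Set Filter Topology

lemma locallyIntegrable_abs_rpow {e : ℝ} (he : -1 < e) :
    LocallyIntegrable (fun x : ℝ => |x| ^ e) := by
  refine locallyIntegrable_of_norm_le_rpow (C := 1) (α := -e) (by simp) (by simp; linarith)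
    (Eventually.of_forall fun x => ?_)
    (continuous_abs.measurable.pow_const e).aestronglyMeasurable
  simp [abs_of_nonneg (Real.rpow_nonneg (abs_nonneg x) e)]

lemma integrableOn_abs_rpow_of_lt_abs {e a : ℝ} (he : e < -1) (ha : 0 < a) :
    IntegrableOn (fun x : ℝ => |x| ^ e) {x | a < |x|} := by
  have hIoi : IntegrableOn (fun x : ℝ => |x| ^ e) (Ioi a) :=
    (integrableOn_Ioi_rpow_of_lt he ha).congr_fun
      (fun x hx => by rw [abs_of_pos (ha.trans hx)]) measurableSet_Ioi
  have hIio : IntegrableOn (fun x : ℝ => |x| ^ e) (Iio (-a)) := by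
    have := ((Measure.measurePreserving_neg volume).integrableOn_comp_preimage
      (MeasurableEquiv.neg ℝ).measurableEmbedding).2 hIoi
    simpa [Function.comp_def, Set.neg_preimage] using this
  have hset : {x : ℝ | a < |x|} = Iio (-a) ∪ Ioi a := by
    ext x; simp [lt_abs, lt_neg, or_comm]
  rw [hset]
  exact hIio.union hIoi

lemma abs_sub_rpow_le {α : ℝ} (hα : 0 ≤ α) (a b : ℝ) :
    |a - b| ^ α ≤ 2 ^ α * (|a| ^ α + |b| ^ α) := by
  have hmax : |a - b| ≤ 2 * max |a| |b| := by
    rw [two_mul]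
    exact (abs_sub a b).trans (add_le_add (le_max_left _ _) (le_max_right _ _))
  calc |a - b| ^ α ≤ (2 * max |a| |b|) ^ α := by gcongr
    _ = 2 ^ α * max (|a| ^ α) (|b| ^ α) := by
      rw [Real.mul_rpow zero_le_two (le_max_of_le_left (abs_nonneg a)),
        (Real.monotoneOn_rpow_Ici_of_exponent_nonneg hα).map_max (abs_nonneg a) (abs_nonneg b)]
    _ ≤ 2 ^ α * (|a| ^ α + |b| ^ α) := by
      gcongr
      exact max_le_add_of_nonneg (by positivity) (by positivity)

namespace MeasureTheory
variable {X Y L : Type*} [MeasurableSpace X] [MeasurableSpace Y] [RCLike L]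
  {μ : Measure X} {ν : Measure Y} [SFinite μ] [SFinite ν] {f : X → L} {g : Y → L}

lemma IntegrableOn.mul_prod {s : Set X} {t : Set Y} (hf : IntegrableOn f s μ)
    (hg : IntegrableOn g t ν) :
    IntegrableOn (fun z : X × Y => f z.1 * g z.2) (s ×ˢ t) (μ.prod ν) := by
  rw [IntegrableOn, ← Measure.prod_restrict]
  exact Integrable.mul_prod hf hg

lemma LocallyIntegrable.mul_prod [TopologicalSpace X] [TopologicalSpace Y]
    (hf : LocallyIntegrable f μ) (hg : LocallyIntegrable g ν) :
    LocallyIntegrable (fun z : X × Y => f z.1 * g z.2) (μ.prod ν) := by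
  intro z
  obtain ⟨s, hs, hfs⟩ := hf z.1
  obtain ⟨t, ht, hgt⟩ := hg z.2
  exact ⟨s ×ˢ t, prod_mem_nhds hs ht, hfs.mul_prod hgt⟩

lemma LocallyIntegrable.comp_sub_left {G E : Type*} [NormedAddCommGroup G] [MeasurableSpace G]
    [BorelSpace G] [NormedAddCommGroup E] {μ : Measure G} [μ.IsAddLeftInvariant] [μ.IsNegInvariant]
    {f : G → E} (hf : LocallyIntegrable f μ) (a : G) :
    LocallyIntegrable (fun x => f (a - x)) μ := by
  intro x
  obtain ⟨s, hs, hfs⟩ := hf (a - x)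
  refine ⟨(a - ·) ⁻¹' s, (continuous_const.sub continuous_id).continuousAt.preimage_mem_nhds hs, ?_⟩
  exact ((Measure.measurePreserving_sub_left μ a).integrableOn_comp_preimage
    (MeasurableEquiv.subLeft a).measurableEmbedding).2 hfs

lemma IntegrableOn.mono_of_ae_norm_le {α E : Type*} [MeasurableSpace α] [NormedAddCommGroup E]
    {μ : Measure α} {s : Set α} {f : α → E} {g : α → ℝ} (hg : IntegrableOn g s μ)
    (hf : AEStronglyMeasurable f μ) (hs : MeasurableSet s) (h : ∀ᵐ x ∂μ, x ∈ s → ‖f x‖ ≤ g x) :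
    IntegrableOn f s μ :=
  Integrable.mono' hg hf.restrict ((ae_restrict_iff' hs).2 h)

end MeasureTheory

lemma rho0_nonneg (p1 p2 : ℝ) (u : ℝ × ℝ) : 0 ≤ rho0 p1 p2 u := by
  unfold rho0; positivity

section Rho0
variable {p1 p2 : ℝ}

lemma rho0_zero (hp1 : 0 < p1) (hp2 : 0 < p2) : rho0 p1 p2 0 = 0 := by
  simp [rho0, Real.zero_rpow hp1.ne', Real.zero_rpow hp2.ne']

@[simp] lemma rho0_neg (u : ℝ × ℝ) : rho0 p1 p2 (-u) = rho0 p1 p2 u := by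
  simp [rho0]

lemma continuous_rho0 (hp1 : 0 ≤ p1) (hp2 : 0 ≤ p2) : Continuous (rho0 p1 p2) :=
  ((continuous_abs.comp continuous_fst).rpow_const fun _ => Or.inr hp1).add
    ((continuous_abs.comp continuous_snd).rpow_const fun _ => Or.inr hp2)

lemma abs_rpow_mul_abs_rpow_le_rho0 (hp1 : 0 < p1) (hp2 : 0 < p2) (u : ℝ × ℝ) :
    |u.1| ^ (1 / p1 + 1 / p2)⁻¹ * |u.2| ^ (1 / p1 + 1 / p2)⁻¹ ≤ rho0 p1 p2 u := by
  set q := (1 / p1 + 1 / p2)⁻¹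
  have hq : 0 < q := by positivity
  have hw : q / p1 + q / p2 = 1 := by
    simp only [q]; field_simp
  have hamgm := Real.geom_mean_le_arith_mean2_weighted (div_pos hq hp1).le (div_pos hq hp2).le
    (Real.rpow_nonneg (abs_nonneg u.1) p1) (Real.rpow_nonneg (abs_nonneg u.2) p2) hw
  rw [← Real.rpow_mul (abs_nonneg _), ← Real.rpow_mul (abs_nonneg _),
    mul_div_cancel₀ _ hp1.ne', mul_div_cancel₀ _ hp2.ne'] at hamgm
  refine hamgm.trans ?_
  have h1 : q / p1 ≤ 1 := by linarith [div_pos hq hp2]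
  have h2 : q / p2 ≤ 1 := by linarith [div_pos hq hp1]
  unfold rho0
  gcongr <;> nlinarith [Real.rpow_nonneg (abs_nonneg u.1) p1, Real.rpow_nonneg (abs_nonneg u.2) p2]

lemma rho0_rpow_le_of_nonpos (hp1 : 0 < p1) (hp2 : 0 < p2) {β : ℝ} (hβ : β ≤ 0) {u : ℝ × ℝ}
    (hu1 : u.1 ≠ 0) (hu2 : u.2 ≠ 0) :
    rho0 p1 p2 u ^ β ≤
      |u.1| ^ ((1 / p1 + 1 / p2)⁻¹ * β) * |u.2| ^ ((1 / p1 + 1 / p2)⁻¹ * β) := by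
  rw [Real.rpow_mul (abs_nonneg _), Real.rpow_mul (abs_nonneg _),
    ← Real.mul_rpow (by positivity) (by positivity)]
  exact Real.rpow_le_rpow_of_nonpos (by positivity) (abs_rpow_mul_abs_rpow_le_rho0 hp1 hp2 u) hβ

lemma locallyIntegrable_rho0_rpow (hp1 : 0 < p1) (hp2 : 0 < p2) {β : ℝ}
    (hβ : -(1 / p1 + 1 / p2) < β) : LocallyIntegrable (fun u => rho0 p1 p2 u ^ β) := by
  have hρ := continuous_rho0 hp1.le hp2.le
  rcases le_or_gt 0 β with hβ0 | hβ0
  · exact (hρ.rpow_const fun _ => Or.inr hβ0).locallyIntegrable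
  have hqβ : -1 < (1 / p1 + 1 / p2)⁻¹ * β := by
    rw [inv_mul_eq_div, lt_div_iff₀ (by positivity)]
    linarith
  have hloc := locallyIntegrable_abs_rpow hqβ
  refine (hloc.mul_prod hloc).mono (hρ.measurable.pow_const β).aestronglyMeasurable ?_
  filter_upwards [Measure.quasiMeasurePreserving_fst.ae (Measure.ae_ne volume 0),
    Measure.quasiMeasurePreserving_snd.ae (Measure.ae_ne volume 0)] with u hu1 hu2
  rw [Real.norm_of_nonneg (Real.rpow_nonneg (rho0_nonneg p1 p2 u) β),
    Real.norm_of_nonneg (by positivity)]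
  exact rho0_rpow_le_of_nonpos hp1 hp2 hβ0.le hu1 hu2

lemma integrableOn_rho0_rpow_neg (hp1 : 0 < p1) (hp2 : 0 < p2) {γ a : ℝ}
    (hγ : 1 / p1 + 1 / p2 < γ) (ha : 0 < a) :
    IntegrableOn (fun u => rho0 p1 p2 u ^ (-γ)) ({x | a < |x|} ×ˢ univ) := by
  have hγ0 : 0 < γ := by linarith [one_div_pos.2 hp1, one_div_pos.2 hp2]
  have hmeas : AEStronglyMeasurable (fun u => rho0 p1 p2 u ^ (-γ)) :=
    ((continuous_rho0 hp1.le hp2.le).measurable.pow_const _).aestronglyMeasurable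
  have hsplit : ({x : ℝ | a < |x|} ×ˢ univ : Set (ℝ × ℝ)) ⊆
      {x | a < |x|} ×ˢ Icc (-1) 1 ∪ {x | a < |x|} ×ˢ {y | 1 < |y|} := by
    rintro ⟨x, y⟩ ⟨hx, -⟩
    rcases le_or_gt |y| 1 with hy | hy
    · exact Or.inl ⟨hx, abs_le.1 hy⟩
    · exact Or.inr ⟨hx, hy⟩
  -- Near `u₂ = 0` only the `|u₁|^{p₁}` part of `ρ₀` helps; for `|u₂| > 1` use AM-GM.
  refine IntegrableOn.mono_set (IntegrableOn.union ?_ ?_) hsplit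
  · have he : p1 * -γ < -1 := by
      have := (div_lt_iff₀ hp1).1 (by linarith [one_div_pos.2 hp2] : 1 / p1 < γ)
      linarith
    refine ((integrableOn_abs_rpow_of_lt_abs he ha).mul_prod
      (integrableOn_const (measure_Icc_lt_top.ne) (C := (1 : ℝ)))).mono_of_ae_norm_le hmeas
      ((measurableSet_lt measurable_const measurable_abs).prod measurableSet_Icc)
      (Eventually.of_forall ?_)
    rintro ⟨x, y⟩ ⟨hx, -⟩
    rw [Real.norm_of_nonneg (Real.rpow_nonneg (rho0_nonneg p1 p2 _) _), mul_one,
      Real.rpow_mul (abs_nonneg x)]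
    exact Real.rpow_le_rpow_of_nonpos (Real.rpow_pos_of_pos (ha.trans hx) p1)
      (le_add_of_nonneg_right (by positivity)) (neg_nonpos.2 hγ0.le)
  · have he : (1 / p1 + 1 / p2)⁻¹ * -γ < -1 := by
      rw [inv_mul_eq_div, div_lt_iff₀ (by positivity)]
      linarith
    refine ((integrableOn_abs_rpow_of_lt_abs he ha).mul_prod
      (integrableOn_abs_rpow_of_lt_abs he one_pos)).mono_of_ae_norm_le hmeas
      ((measurableSet_lt measurable_const measurable_abs).prod
        (measurableSet_lt measurable_const measurable_abs))
      (Eventually.of_forall ?_)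
    rintro ⟨x, y⟩ ⟨hx, hy⟩
    rw [Real.norm_of_nonneg (Real.rpow_nonneg (rho0_nonneg p1 p2 _) _)]
    exact rho0_rpow_le_of_nonpos hp1 hp2 (neg_nonpos.2 hγ0.le)
      (abs_pos.1 (ha.trans hx)) (abs_pos.1 (one_pos.trans hy))

lemma rho0_div_two_rpow_le {t x y a : ℝ} (hp1 : 0 < p1) (ht : 0 ≤ t)
    (hx : 2 * t ≤ |x|) (ha : a ∈ Icc (-x) (t - x)) :
    rho0 p1 p2 (x, y) / 2 ^ p1 ≤ rho0 p1 p2 (a, -y) := by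
  have hxa : |x| / 2 ≤ |a| := by
    have hax : |a + x| ≤ t := abs_le.2 ⟨by linarith [ha.1], by linarith [ha.2]⟩
    have := abs_sub (a + x) a
    rw [add_sub_cancel_left] at this
    linarith
  have h2 : 1 ≤ (2 : ℝ) ^ p1 := Real.one_le_rpow one_le_two hp1.le
  simp only [rho0, abs_neg, add_div]
  gcongr
  · rw [← Real.div_rpow (abs_nonneg x) zero_le_two]
    gcongr
  · exact div_le_self (by positivity) h2

end Rho0

section PartialDerivatives
variable {g : ℝ × ℝ → ℝ} {w : ℝ × ℝ}

lemma hasDerivAt_mk_fst (a b : ℝ) : HasDerivAt (fun a : ℝ => (a, b)) (1, 0) a :=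
  (hasDerivAt_id a).prodMk (hasDerivAt_const a b)

lemma hasDerivAt_mk_snd (a b : ℝ) : HasDerivAt (fun b : ℝ => (a, b)) (0, 1) b :=
  (hasDerivAt_const b a).prodMk (hasDerivAt_id b)

lemma pd2_eventuallyEq_fderiv (h : ContDiffAt ℝ 1 g w) :
    pd2 g =ᶠ[𝓝 w] fun y => fderiv ℝ g y (0, 1) := by
  filter_upwards [h.eventually (by simp)] with y hy
  exact ((hy.differentiableAt one_ne_zero).hasFDerivAt.comp_hasDerivAt y.2
    (hasDerivAt_mk_snd y.1 y.2)).deriv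

lemma continuousAt_pd2 (h : ContDiffAt ℝ 1 g w) : ContinuousAt (pd2 g) w :=
  ((h.continuousAt_fderiv one_ne_zero).clm_apply continuousAt_const).congr
    (pd2_eventuallyEq_fderiv h).symm

lemma hasDerivAt_pd2 (h : ContDiffAt ℝ 2 g w) :
    HasDerivAt (fun a => pd2 g (a, w.2)) (pd12 g w) w.1 := by
  have hD : HasFDerivAt (fderiv ℝ g) (fderiv ℝ (fderiv ℝ g) w) w :=
    ((h.fderiv_right (m := 1) le_rfl).differentiableAt one_ne_zero).hasFDerivAt
  have hdiff : ∀ᶠ y in 𝓝 w, HasFDerivAt g (fderiv ℝ g y) y := by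
    filter_upwards [h.eventually (by simp)] with y hy
    exact (hy.differentiableAt two_ne_zero).hasFDerivAt
  have hpd1 : (fun b => deriv (fun a => g (a, b)) w.1) =ᶠ[𝓝 w.2]
      fun b => fderiv ℝ g (w.1, b) (1, 0) := by
    filter_upwards [(hasDerivAt_mk_snd w.1 w.2).continuousAt.preimage_mem_nhds hdiff] with b hb
    exact (show HasFDerivAt g _ (w.1, b) from hb).comp_hasDerivAt w.1 (hasDerivAt_mk_fst w.1 b)
      |>.deriv
  have hpd12 : pd12 g w = fderiv ℝ (fderiv ℝ g) w (1, 0) (0, 1) := by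
    have hline : HasDerivAt (fun b => fderiv ℝ g (w.1, b) (1, 0))
        (fderiv ℝ (fderiv ℝ g) w (0, 1) (1, 0)) w.2 := by
      have hc : HasDerivAt (fun b => fderiv ℝ g (w.1, b)) (fderiv ℝ (fderiv ℝ g) w (0, 1)) w.2 :=
        hD.comp_hasDerivAt w.2 (hasDerivAt_mk_snd w.1 w.2)
      simpa using hc.clm_apply (hasDerivAt_const w.2 ((1 : ℝ), (0 : ℝ)))
    rw [pd12, hpd1.deriv_eq, hline.deriv]
    -- `pd12` differentiates in the order opposite to the one needed here (Schwarz).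
    exact second_derivative_symmetric_of_eventually hdiff hD _ _
  rw [hpd12]
  refine HasDerivAt.congr_of_eventuallyEq ?_
    ((hasDerivAt_mk_fst w.1 w.2).continuousAt.preimage_mem_nhds
      (pd2_eventuallyEq_fderiv (h.of_le one_le_two)))
  have hc : HasDerivAt (fun a => fderiv ℝ g (a, w.2)) (fderiv ℝ (fderiv ℝ g) w (1, 0)) w.1 :=
    hD.comp_hasDerivAt w.1 (hasDerivAt_mk_fst w.1 w.2)
  simpa using hc.clm_apply (hasDerivAt_const w.1 ((0 : ℝ), (1 : ℝ)))

lemma abs_pd2_sub_le {a₀ a₁ b K : ℝ} (ha : a₀ ≤ a₁)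
    (hg : ∀ a ∈ Icc a₀ a₁, ContDiffAt ℝ 2 g (a, b))
    (hK : ∀ a ∈ Icc a₀ a₁, |pd12 g (a, b)| ≤ K) :
    |pd2 g (a₁, b) - pd2 g (a₀, b)| ≤ K * (a₁ - a₀) :=
  norm_image_sub_le_of_norm_deriv_le_segment' (f := fun a => pd2 g (a, b))
    (fun a ha => (hasDerivAt_pd2 (hg a ha)).hasDerivWithinAt)
    (fun a ha => hK a (Ico_subset_Icc_self ha)) a₁ (right_mem_Icc.2 ha)

end PartialDerivatives

/-- The paper's `h̃₁(t; u)`. -/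
noncomputable def pd2Incr (g : ℝ × ℝ → ℝ) (t : ℝ) (u : ℝ × ℝ) : ℝ :=
  pd2 g (t - u.1, -u.2) - pd2 g (-u.1, -u.2)

section Increment
variable {g : ℝ × ℝ → ℝ} {p1 p2 C t α : ℝ}

lemma aestronglyMeasurable_pd2Incr_rpow (hsm : ContDiffOn ℝ 2 g {0}ᶜ) (t α : ℝ) :
    AEStronglyMeasurable (fun u => |pd2Incr g t u| ^ α) := by
  have hcont : ContinuousOn (pd2 g) {0}ᶜ := fun w hw =>
    (continuousAt_pd2 ((hsm.contDiffAt (isOpen_compl_singleton.mem_nhds hw)).of_le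
      one_le_two)).continuousWithinAt
  have hpd2 : AEStronglyMeasurable (pd2 g) := by
    simpa using hcont.aestronglyMeasurable (μ := volume) (measurableSet_singleton 0).compl
  have h1 := hpd2.comp_measurePreserving
    ((Measure.measurePreserving_sub_left volume t).prod (Measure.measurePreserving_neg volume))
  have h2 := hpd2.comp_measurePreserving
    ((Measure.measurePreserving_neg volume).prod (Measure.measurePreserving_neg volume))
  exact ((h1.sub h2).norm.aemeasurable.pow_const α).aestronglyMeasurable

lemma abs_pd2Incr_rpow_le (hC : 0 ≤ C) (hα : 0 ≤ α)
    (hD2 : ∀ u : ℝ × ℝ, u ≠ 0 → |pd2 g u| ≤ C * rho0 p1 p2 u ^ (1 / p1 - 1)) {u : ℝ × ℝ}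
    (h₁ : ((t - u.1, -u.2) : ℝ × ℝ) ≠ 0) (h₂ : ((-u.1, -u.2) : ℝ × ℝ) ≠ 0) :
    |pd2Incr g t u| ^ α ≤ 2 ^ α * C ^ α *
      (rho0 p1 p2 (t - u.1, -u.2) ^ ((1 / p1 - 1) * α) +
        rho0 p1 p2 (-u.1, -u.2) ^ ((1 / p1 - 1) * α)) := by
  have hbound : ∀ v : ℝ × ℝ, v ≠ 0 →
      |pd2 g v| ^ α ≤ C ^ α * rho0 p1 p2 v ^ ((1 / p1 - 1) * α) := fun v hv => by
    rw [Real.rpow_mul (rho0_nonneg p1 p2 v),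
      ← Real.mul_rpow hC (Real.rpow_nonneg (rho0_nonneg p1 p2 v) _)]
    exact Real.rpow_le_rpow (abs_nonneg _) (hD2 v hv) hα
  calc |pd2Incr g t u| ^ α ≤ 2 ^ α * (|pd2 g (t - u.1, -u.2)| ^ α + |pd2 g (-u.1, -u.2)| ^ α) :=
        abs_sub_rpow_le hα _ _
    _ ≤ 2 ^ α * (C ^ α * rho0 p1 p2 (t - u.1, -u.2) ^ ((1 / p1 - 1) * α) +
          C ^ α * rho0 p1 p2 (-u.1, -u.2) ^ ((1 / p1 - 1) * α)) := by
      gcongr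
      exacts [hbound _ h₁, hbound _ h₂]
    _ = _ := by ring

lemma integrableOn_pd2Incr_rpow_of_isCompact (hp1 : 0 < p1) (hp2 : 0 < p2) (hC : 0 ≤ C)
    (hα : 0 ≤ α) (hβ : -(1 / p1 + 1 / p2) < (1 / p1 - 1) * α) (hsm : ContDiffOn ℝ 2 g {0}ᶜ)
    (hD2 : ∀ u : ℝ × ℝ, u ≠ 0 → |pd2 g u| ≤ C * rho0 p1 p2 u ^ (1 / p1 - 1))
    {K : Set (ℝ × ℝ)} (hK : IsCompact K) :
    IntegrableOn (fun u => |pd2Incr g t u| ^ α) K := by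
  have hloc := locallyIntegrable_rho0_rpow hp1 hp2 hβ
  refine IntegrableOn.mono_of_ae_norm_le
    ((((hloc.comp_sub_left (t, 0)).add hloc).integrableOn_isCompact hK).const_mul
      (2 ^ α * C ^ α)) (aestronglyMeasurable_pd2Incr_rpow hsm t α) hK.measurableSet ?_
  filter_upwards [Measure.ae_ne volume 0, Measure.ae_ne volume (t, 0)] with u hu0 hut _
  have h₁ : ((t - u.1, -u.2) : ℝ × ℝ) ≠ 0 := fun h => hut <| by
    rw [Prod.mk_eq_zero] at h
    exact Prod.ext (by linarith [h.1]) (by linarith [h.2])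
  have hshift : ((t, 0) - u : ℝ × ℝ) = (t - u.1, -u.2) := by ext <;> simp
  rw [Real.norm_of_nonneg (by positivity), Pi.add_apply, hshift, ← rho0_neg u]
  exact abs_pd2Incr_rpow_le hC hα hD2 h₁ (neg_ne_zero.2 hu0)

lemma abs_pd2Incr_le_of_le_rho0 (hp1 : 0 < p1) (hp2 : 0 < p2) (hC : 0 ≤ C) (ht : 0 ≤ t)
    (hsm : ContDiffOn ℝ 2 g {0}ᶜ) (hD12 : ∀ u : ℝ × ℝ, u ≠ 0 → |pd12 g u| ≤ C * (rho0 p1 p2 u)⁻¹)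
    {x y r : ℝ} (hr : 0 < r) (hρ : ∀ a ∈ Icc (-x) (t - x), r ≤ rho0 p1 p2 (a, -y)) :
    |pd2Incr g t (x, y)| ≤ C * t / r := by
  have hne : ∀ a ∈ Icc (-x) (t - x), ((a, -y) : ℝ × ℝ) ≠ 0 := fun a ha h0 => by
    have := hρ a ha
    rw [h0, rho0_zero hp1 hp2] at this
    linarith
  have hmvt := abs_pd2_sub_le (g := g) (K := C / r) (by linarith)
    (fun a ha => hsm.contDiffAt (isOpen_compl_singleton.mem_nhds (hne a ha)))
    (fun a ha => (hD12 _ (hne a ha)).trans <| by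
      rw [div_eq_mul_inv]
      gcongr
      exact hρ a ha)
  calc |pd2Incr g t (x, y)| ≤ C / r * (t - x - -x) := hmvt
    _ = C * t / r := by ring

lemma integrableOn_pd2Incr_rpow_far_fst (hp1 : 0 < p1) (hp2 : 0 < p2) (hC : 0 ≤ C)
    (hPα : 1 / p1 + 1 / p2 < α) (ht : 0 < t) (hsm : ContDiffOn ℝ 2 g {0}ᶜ)
    (hD12 : ∀ u : ℝ × ℝ, u ≠ 0 → |pd12 g u| ≤ C * (rho0 p1 p2 u)⁻¹) :
    IntegrableOn (fun u => |pd2Incr g t u| ^ α) ({x | 2 * t < |x|} ×ˢ univ) := by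
  have hα0 : 0 ≤ α := by linarith [one_div_pos.2 hp1, one_div_pos.2 hp2]
  refine IntegrableOn.mono_of_ae_norm_le
    ((integrableOn_rho0_rpow_neg hp1 hp2 hPα (by positivity)).const_mul ((C * t * 2 ^ p1) ^ α))
    (aestronglyMeasurable_pd2Incr_rpow hsm t α)
    ((measurableSet_lt measurable_const measurable_abs).prod MeasurableSet.univ)
    (Eventually.of_forall ?_)
  rintro ⟨x, y⟩ ⟨hx, -⟩
  have hρ : 0 < rho0 p1 p2 (x, y) :=
    (Real.rpow_pos_of_pos ((by positivity : 0 < 2 * t).trans hx) p1).trans_le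
      (le_add_of_nonneg_right (by positivity))
  have hbound := abs_pd2Incr_le_of_le_rho0 hp1 hp2 hC ht.le hsm hD12 (by positivity)
    fun a ha => rho0_div_two_rpow_le (y := y) hp1 ht.le hx.le ha
  rw [Real.norm_of_nonneg (by positivity)]
  calc |pd2Incr g t (x, y)| ^ α ≤ (C * t / (rho0 p1 p2 (x, y) / 2 ^ p1)) ^ α := by gcongr
    _ = (C * t * 2 ^ p1) ^ α * rho0 p1 p2 (x, y) ^ (-α) := by
      rw [div_div_eq_mul_div, Real.div_rpow (by positivity) hρ.le, Real.rpow_neg hρ.le,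
        div_eq_mul_inv]

lemma integrableOn_pd2Incr_rpow_far_snd (hp1 : 0 < p1) (hp2 : 0 < p2) (hC : 0 ≤ C)
    (hPα : 1 / p1 + 1 / p2 < α) (ht : 0 ≤ t) (hsm : ContDiffOn ℝ 2 g {0}ᶜ)
    (hD12 : ∀ u : ℝ × ℝ, u ≠ 0 → |pd12 g u| ≤ C * (rho0 p1 p2 u)⁻¹) {a : ℝ} (ha : 0 < a)
    (R : ℝ) : IntegrableOn (fun u => |pd2Incr g t u| ^ α) (Icc (-R) R ×ˢ {y | a < |y|}) := by
  have hα0 : 0 ≤ α := by linarith [one_div_pos.2 hp1, one_div_pos.2 hp2]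
  have he : p2 * -α < -1 := by
    have := (div_lt_iff₀ hp2).1 (by linarith [one_div_pos.2 hp1] : 1 / p2 < α)
    linarith
  refine IntegrableOn.mono_of_ae_norm_le
    (((integrableOn_const measure_Icc_lt_top.ne (C := (1 : ℝ))).mul_prod
      (integrableOn_abs_rpow_of_lt_abs he ha)).const_mul ((C * t) ^ α))
    (aestronglyMeasurable_pd2Incr_rpow hsm t α)
    (measurableSet_Icc.prod (measurableSet_lt measurable_const measurable_abs))
    (Eventually.of_forall ?_)
  rintro ⟨x, y⟩ ⟨-, hy⟩
  have hy0 : 0 < |y| ^ p2 := Real.rpow_pos_of_pos (ha.trans hy) p2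
  have hbound := abs_pd2Incr_le_of_le_rho0 (x := x) hp1 hp2 hC ht hsm hD12 hy0 fun b _ => by
    simp only [rho0, abs_neg]
    exact le_add_of_nonneg_left (by positivity)
  rw [Real.norm_of_nonneg (by positivity)]
  calc |pd2Incr g t (x, y)| ^ α ≤ (C * t / |y| ^ p2) ^ α := by gcongr
    _ = (C * t) ^ α * (1 * |y| ^ (p2 * -α)) := by
      rw [Real.div_rpow (by positivity) hy0.le, one_mul, Real.rpow_mul (abs_nonneg y),
        Real.rpow_neg (by positivity), div_eq_mul_inv]

end Increment

lemma univ_subset_Icc_prod_Icc_union (R : ℝ) :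
    (univ : Set (ℝ × ℝ)) ⊆
      Icc (-R) R ×ˢ Icc (-R) R ∪ {x | R < |x|} ×ˢ univ ∪ Icc (-R) R ×ˢ {y | R < |y|} := by
  rintro ⟨x, y⟩ -
  rcases le_or_gt |x| R with hx | hx
  · rcases le_or_gt |y| R with hy | hy
    · exact Or.inl (Or.inl ⟨abs_le.1 hx, abs_le.1 hy⟩)
    · exact Or.inr ⟨abs_le.1 hx, hy⟩
  · exact Or.inl (Or.inr ⟨hx, trivial⟩)

theorem stmt_13_general (α p1 p2 C : ℝ) (hα0 : 0 < α)
    (hp1 : 0 < p1) (hp2 : 0 < p2)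
    (hPhigh : 1 / p1 + 1 / p2 < α)
    (hPc : 1 < (1 + α) / (α * p1) + 1 / (α * p2)) (hC : 0 < C)
    (g0 : ℝ × ℝ → ℝ)
    (hsm : ContDiffOn ℝ 2 g0 {(0 : ℝ × ℝ)}ᶜ)
    (hD2 : ∀ u : ℝ × ℝ, u ≠ 0 → |pd2 g0 u| ≤ C * rho0 p1 p2 u ^ (1 / p1 - 1))
    (hD12 : ∀ u : ℝ × ℝ, u ≠ 0 → |pd12 g0 u| ≤ C * (rho0 p1 p2 u)⁻¹) :
    ∀ t : ℝ, 0 < t →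
      Integrable (fun u : ℝ × ℝ => |pd2 g0 (t - u.1, -u.2) - pd2 g0 (-u.1, -u.2)| ^ α) volume := by
  intro t ht
  have hβ : -(1 / p1 + 1 / p2) < (1 / p1 - 1) * α := by
    have h : (1 + α) / (α * p1) + 1 / (α * p2) =
        ((1 / p1 - 1) * α + (1 / p1 + 1 / p2)) / α + 1 := by
      field_simp
      ring
    rw [h, lt_add_iff_pos_left, div_pos_iff_of_pos_right hα0] at hPc
    linarith
  rw [← integrableOn_univ]
  refine IntegrableOn.mono_set (IntegrableOn.union (IntegrableOn.union ?_ ?_) ?_)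
    (univ_subset_Icc_prod_Icc_union (2 * t))
  · exact integrableOn_pd2Incr_rpow_of_isCompact hp1 hp2 hC.le hα0.le hβ hsm hD2
      (isCompact_Icc.prod isCompact_Icc)
  · exact integrableOn_pd2Incr_rpow_far_fst hp1 hp2 hC.le hPhigh ht hsm hD12
  · exact integrableOn_pd2Incr_rpow_far_snd hp1 hp2 hC.le hPhigh ht.le hsm hD12 (by positivity) _

theorem stmt_13 (α p1 p2 C : ℝ) (hα0 : 0 < α) (hα2 : α ≤ 2)
    (hp1 : 0 < p1) (hp2 : 0 < p2)
    (hPlow : α / (1 + α) < 1 / p1 + 1 / p2) (hPhigh : 1 / p1 + 1 / p2 < α)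
    (hPne : 1 / p1 + 1 / p2 ≠ 1)
    (hPc : 1 < (1 + α) / (α * p1) + 1 / (α * p2)) (hC : 0 < C)
    (g0 : ℝ × ℝ → ℝ) (hmeas : Measurable g0)
    (hsm : ContDiffOn ℝ 2 g0 {(0 : ℝ × ℝ)}ᶜ)
    (hD2 : ∀ u : ℝ × ℝ, u ≠ 0 → |pd2 g0 u| ≤ C * rho0 p1 p2 u ^ (1 / p1 - 1))
    (hD12 : ∀ u : ℝ × ℝ, u ≠ 0 → |pd12 g0 u| ≤ C * (rho0 p1 p2 u)⁻¹) :
    ∀ t : ℝ, 0 < t →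
      Integrable (fun u : ℝ × ℝ => |pd2 g0 (t - u.1, -u.2) - pd2 g0 (-u.1, -u.2)| ^ α) volume :=
  stmt_13_general α p1 p2 C hα0 hp1 hp2 hPhigh hPc hC g0 hsm hD2 hD12
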